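/- arXiv:2512.08432 — 6 statements merged into one kernel-verified Lean document; each statement's English description precedes it below -/
import Mathlib

section
/- Let H be an N×N complex Hermitian matrix with H² = H, let |ψ⟩ ∈ ℂ^N be a unit vector, ψ = |ψ⟩⟨ψ|, and set q := ⟨ψ|H|ψ⟩. Define the skew-Hermitian matrices X := [H, ψ] and Y := i[H, X]. Then ‖X‖_F = ‖Y‖_F = √(2q(1−q)) and Re Tr(X† Y) = 0. -/
open Matrix

/-- The rank-one projector `|ψ⟩⟨ψ|` associated with a vector `ψ`. -/
noncomputable def rankOneProj {N : ℕ} (ψ : Fin N → ℂ) : Matrix (Fin N) (Fin N) ℂ :=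
  Matrix.vecMulVec ψ (star ψ)

/-- The Frobenius norm `‖A‖_F = √(Tr(A†A))`. -/
noncomputable def frobNorm {N : ℕ} (A : Matrix (Fin N) (Fin N) ℂ) : ℝ :=
  Real.sqrt (Matrix.trace (Aᴴ * A)).re

/-!
Split along `H` and `1 - H`: with `B := H ψ (1 - H)` one has `[H, ψ] = B - B†` and
`[H, [H, ψ]] = B + B†`, and `B² = 0` because `(1 - H) H = 0`. Hence all cross terms in
`Tr((B ∓ B†)†(B ± B†))` vanish, leaving `‖X‖_F² = ‖Y‖_F² = 2 Tr(B†B)` and `Tr(X†Y) = 0`.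
Finally `Tr(B†B) = Tr(ψ H ψ (1 - H)) = ⟨ψ|H|ψ⟩⟨ψ|1 - H|ψ⟩ = q(1 - q)`.
-/

section Ring

variable {R : Type*} [Ring R]

theorem commutator_eq_mul_mul_one_sub_sub (h p : R) :
    h * p - p * h = h * p * (1 - h) - (1 - h) * p * h := by
  noncomm_ring

namespace IsIdempotentElem

variable {h : R} (hh : IsIdempotentElem h) (p : R)
include hh

theorem commutator_commutator_eq :
    h * (h * p - p * h) - (h * p - p * h) * h = h * p * (1 - h) + (1 - h) * p * h := by
  calc h * (h * p - p * h) - (h * p - p * h) * h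
      = (h * h) * p - h * p * h - h * p * h + p * (h * h) := by noncomm_ring
    _ = h * p * (1 - h) + (1 - h) * p * h := by rw [hh.eq]; noncomm_ring

theorem mul_mul_one_sub_mul_self : h * p * (1 - h) * (h * p * (1 - h)) = 0 := by
  calc h * p * (1 - h) * (h * p * (1 - h)) = h * p * ((1 - h) * h) * p * (1 - h) := by
        noncomm_ring
    _ = 0 := by rw [hh.one_sub_mul_self]; simp

end IsIdempotentElem

theorem IsSelfAdjoint.star_mul_mul_one_sub [StarRing R] {h p : R} (hh : IsSelfAdjoint h)
    (hp : IsSelfAdjoint p) : star (h * p * (1 - h)) = (1 - h) * p * h := by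
  simp only [star_mul, star_sub, star_one, hh.star_eq, hp.star_eq, mul_assoc]

end Ring

namespace Matrix

variable {n R : Type*} [Fintype n] [CommRing R]

theorem trace_vecMulVec_mul_mul_vecMulVec_mul (u v : n → R) (M K : Matrix n n R) :
    trace (vecMulVec u v * M * vecMulVec u v * K) = (v ⬝ᵥ M *ᵥ u) * (v ⬝ᵥ K *ᵥ u) := by
  rw [vecMulVec_mul, vecMulVec_mul_vecMulVec, vecMulVec_mul, trace_vecMulVec, smul_vecMul,
    dotProduct_smul, dotProduct_mulVec, dotProduct_mulVec, dotProduct_comm u, smul_eq_mul]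

variable [StarRing R]

section SquareZero

variable {B : Matrix n n R} (hB : B * B = 0)
include hB

theorem trace_conjTranspose_mul_conjTranspose_of_mul_self_eq_zero : trace (Bᴴ * Bᴴ) = 0 := by
  rw [← conjTranspose_mul, hB, conjTranspose_zero, trace_zero]

theorem trace_conjTranspose_mul_self_sub_conjTranspose :
    trace ((B - Bᴴ)ᴴ * (B - Bᴴ)) = 2 * trace (Bᴴ * B) := by
  simp only [conjTranspose_sub, conjTranspose_conjTranspose, sub_mul, mul_sub, trace_sub, hB,
    trace_conjTranspose_mul_conjTranspose_of_mul_self_eq_zero hB, trace_mul_comm B Bᴴ, trace_zero]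
  ring

theorem trace_conjTranspose_mul_self_add_conjTranspose :
    trace ((B + Bᴴ)ᴴ * (B + Bᴴ)) = 2 * trace (Bᴴ * B) := by
  simp only [conjTranspose_add, conjTranspose_conjTranspose, add_mul, mul_add, trace_add, hB,
    trace_conjTranspose_mul_conjTranspose_of_mul_self_eq_zero hB, trace_mul_comm B Bᴴ, trace_zero]
  ring

theorem trace_conjTranspose_sub_mul_add :
    trace ((B - Bᴴ)ᴴ * (B + Bᴴ)) = 0 := by
  simp only [conjTranspose_sub, conjTranspose_conjTranspose, sub_mul, mul_add, trace_sub,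
    trace_add, hB, trace_conjTranspose_mul_conjTranspose_of_mul_self_eq_zero hB,
    trace_mul_comm B Bᴴ, trace_zero]
  ring

end SquareZero

theorem trace_conjTranspose_mul_self_mul_mul_one_sub [DecidableEq n] {H P : Matrix n n R}
    (hH : IsStarProjection H) (hP : P.IsHermitian) :
    trace ((H * P * (1 - H))ᴴ * (H * P * (1 - H))) = trace (P * H * P * (1 - H)) := by
  have hHH : H * H = H := hH.isIdempotentElem
  have hKK : (1 - H) * (1 - H) = 1 - H := hH.isIdempotentElem.one_sub
  rw [← star_eq_conjTranspose, hH.isSelfAdjoint.star_mul_mul_one_sub hP.isSelfAdjoint]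
  calc trace ((1 - H) * P * H * (H * P * (1 - H)))
      = trace ((1 - H) * (P * (H * H) * P * (1 - H))) := by simp only [mul_assoc]
    _ = trace (P * (H * H) * P * ((1 - H) * (1 - H))) := by
        rw [trace_mul_comm]; simp only [mul_assoc]
    _ = trace (P * H * P * (1 - H)) := by rw [hHH, hKK]

end Matrix

theorem rankOneProj_isHermitian {N : ℕ} (ψ : Fin N → ℂ) : (rankOneProj ψ).IsHermitian := by
  rw [IsHermitian, rankOneProj, conjTranspose_vecMulVec, star_star]

theorem frobNorm_eq_sqrt {N : ℕ} {A : Matrix (Fin N) (Fin N) ℂ} {r : ℝ}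
    (h : trace (Aᴴ * A) = r) : frobNorm A = √r := by
  rw [frobNorm, h, Complex.ofReal_re]

theorem frobNorm_smul {N : ℕ} (c : ℂ) (A : Matrix (Fin N) (Fin N) ℂ) :
    frobNorm (c • A) = ‖c‖ * frobNorm A := by
  have hc : star c * c = ((‖c‖ ^ 2 : ℝ) : ℂ) := by
    rw [Complex.star_def, Complex.conj_mul', Complex.ofReal_pow]
  rw [frobNorm, frobNorm, conjTranspose_smul, Matrix.smul_mul, Matrix.mul_smul, smul_smul,
    trace_smul, smul_eq_mul, hc, Complex.re_ofReal_mul, Real.sqrt_mul (sq_nonneg _),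
    Real.sqrt_sq (norm_nonneg c)]

theorem stmt_1 {N : ℕ} (H : Matrix (Fin N) (Fin N) ℂ)
    (hHerm : H.IsHermitian) (hProj : H * H = H)
    (ψ : Fin N → ℂ) (hψ : star ψ ⬝ᵥ ψ = 1)
    (q : ℝ) (hq : star ψ ⬝ᵥ (H *ᵥ ψ) = (q : ℂ))
    (X Y : Matrix (Fin N) (Fin N) ℂ)
    (hX : X = H * rankOneProj ψ - rankOneProj ψ * H)
    (hY : Y = Complex.I • (H * X - X * H)) :
    frobNorm X = Real.sqrt (2 * q * (1 - q)) ∧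
    frobNorm Y = Real.sqrt (2 * q * (1 - q)) ∧
    (Matrix.trace (Xᴴ * Y)).re = 0 := by
  have hH : IsStarProjection H := ⟨hProj, hHerm.isSelfAdjoint⟩
  have hP := rankOneProj_isHermitian ψ
  set B := H * rankOneProj ψ * (1 - H)
  have hBstar : Bᴴ = (1 - H) * rankOneProj ψ * H :=
    hH.isSelfAdjoint.star_mul_mul_one_sub hP.isSelfAdjoint
  have hXB : X = B - Bᴴ := by rw [hX, hBstar, commutator_eq_mul_mul_one_sub_sub]
  have hYB : Y = Complex.I • (B + Bᴴ) := by
    rw [hY, hX, hBstar, hH.isIdempotentElem.commutator_commutator_eq]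
  have hBB : B * B = 0 := hH.isIdempotentElem.mul_mul_one_sub_mul_self _
  have hBnorm : 2 * trace (Bᴴ * B) = (2 * q * (1 - q) : ℝ) := by
    rw [trace_conjTranspose_mul_self_mul_mul_one_sub hH hP, rankOneProj,
      trace_vecMulVec_mul_mul_vecMulVec_mul, sub_mulVec, one_mulVec, dotProduct_sub, hψ, hq]
    push_cast
    ring
  refine ⟨?_, ?_, ?_⟩
  · rw [hXB]
    exact frobNorm_eq_sqrt (by rw [trace_conjTranspose_mul_self_sub_conjTranspose hBB, hBnorm])
  · rw [hYB, frobNorm_smul, Complex.norm_I, one_mul]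
    exact frobNorm_eq_sqrt (by rw [trace_conjTranspose_mul_self_add_conjTranspose hBB, hBnorm])
  · rw [hXB, hYB, Matrix.mul_smul, trace_smul, trace_conjTranspose_sub_mul_add hBB, smul_zero,
      Complex.zero_re]
end

section
/- Let H be an N×N complex Hermitian matrix with H² = H, let |ψ0⟩ ∈ ℂ^N be a unit vector, ψ0 = |ψ0⟩⟨ψ0|, and set X0 := [H, ψ0], Y0 := i[H, X0]. Then for every real θ, the conjugation by the matrix exponential e^{iθH} satisfies e^{iθH} ψ0 e^{−iθH} = ψ0 + i sin(θ) X0 + i (cos(θ) − 1) Y0; equivalently, i e^{iθH} ψ0 e^{−iθH} = i ψ0 − sin(θ) X0 + (cos(θ) − 1) Y0. -/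
/-!
Since `H` is idempotent, `e^{iθH} = 1 + (e^{iθ} - 1) H`. Conjugating `ψ₀` by it therefore gives a
combination of `ψ₀`, `Hψ₀`, `ψ₀H` and `Hψ₀H`, and so does `Y₀ = i (Hψ₀ + ψ₀H - 2 Hψ₀H)`; the
coefficients agree by `|e^{iθ} - 1|² = 2 - 2 cos θ`.
-/

open Matrix

/-- The gate `e^{iθM}` for a matrix `M` and a real angle `θ`. -/
noncomputable def expGate {N : ℕ} (M : Matrix (Fin N) (Fin N) ℂ) (θ : ℝ) :
    Matrix (Fin N) (Fin N) ℂ :=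
  NormedSpace.exp ((Complex.I * (θ : ℂ)) • M)

open scoped Nat

theorem IsIdempotentElem.exp_smul {𝔸 : Type*} [Ring 𝔸] [Algebra ℂ 𝔸] [TopologicalSpace 𝔸]
    [IsTopologicalRing 𝔸] [ContinuousSMul ℂ 𝔸] [T2Space 𝔸] {P : 𝔸} (hP : IsIdempotentElem P)
    (c : ℂ) : NormedSpace.exp (c • P) = 1 + (Complex.exp c - 1) • P := by
  have hterm (n : ℕ) : ((n ! : ℂ)⁻¹) • (c • P) ^ n =
      ((n ! : ℂ)⁻¹ * c ^ n) • P + if n = 0 then 1 - P else 0 := by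
    rcases n with _ | n
    · simp
    · simp [smul_pow, hP.pow_succ_eq, mul_smul]
  have hsum : HasSum (fun n : ℕ => ((n ! : ℂ)⁻¹) • (c • P) ^ n)
      (Complex.exp c • P + (1 - P)) := by
    simp only [hterm]
    refine (HasSum.smul_const ?_ P).add (hasSum_ite_eq 0 (1 - P))
    simpa [Complex.exp_eq_exp_ℂ] using NormedSpace.exp_series_hasSum_exp' (𝕂 := ℂ) c
  rw [congrFun (NormedSpace.exp_eq_tsum ℂ) _, hsum.tsum_eq]
  module

theorem expGate_of_isIdempotentElem {N : ℕ} {H : Matrix (Fin N) (Fin N) ℂ}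
    (hH : IsIdempotentElem H) (θ : ℝ) :
    expGate H θ = 1 + (Complex.exp (θ * Complex.I) - 1) • H := by
  rw [expGate, hH.exp_smul, mul_comm]

theorem one_add_smul_mul_mul_one_add_smul {R 𝔸 : Type*} [CommSemiring R] [Ring 𝔸] [Algebra R 𝔸]
    (H P : 𝔸) (a b : R) :
    (1 + a • H) * P * (1 + b • H) = P + a • (H * P) + b • (P * H) + (a * b) • (H * P * H) := by
  simp only [add_mul, mul_add, one_mul, mul_one, smul_mul_assoc, mul_smul_comm]
  module

theorem IsIdempotentElem.conj_rotation {𝔸 : Type*} [Ring 𝔸] [Algebra ℂ 𝔸] {H : 𝔸}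
    (hH : IsIdempotentElem H) (P : 𝔸) (θ : ℝ) :
    Complex.I • ((1 + (Complex.exp (θ * Complex.I) - 1) • H) * P *
        (1 + (Complex.exp ((-θ : ℝ) * Complex.I) - 1) • H)) =
      Complex.I • P - (Real.sin θ : ℂ) • (H * P - P * H) +
        ((Real.cos θ - 1 : ℝ) : ℂ) • (Complex.I • (H * (H * P - P * H) - (H * P - P * H) * H)) := by
  have hHHP : H * (H * P) = H * P := by rw [← mul_assoc, hH.eq]
  rw [one_add_smul_mul_mul_one_add_smul]
  simp only [mul_sub, sub_mul, mul_assoc, hH.eq, hHHP]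
  push_cast
  rw [Complex.exp_mul_I, Complex.exp_mul_I, Complex.cos_neg, Complex.sin_neg]
  match_scalars
  · ring
  · linear_combination Complex.sin θ * Complex.I_sq
  · linear_combination -Complex.sin θ * Complex.I_sq
  · linear_combination Complex.I * Complex.cos_sq_add_sin_sq (θ : ℂ)
      - Complex.I * Complex.sin θ ^ 2 * Complex.I_sq

theorem stmt_3_general {N : ℕ} (H : Matrix (Fin N) (Fin N) ℂ)
    (hProj : H * H = H)
    (ψ₀ : Fin N → ℂ)
    (X₀ Y₀ : Matrix (Fin N) (Fin N) ℂ)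
    (hX₀ : X₀ = H * rankOneProj ψ₀ - rankOneProj ψ₀ * H)
    (hY₀ : Y₀ = Complex.I • (H * X₀ - X₀ * H)) :
    ∀ θ : ℝ,
      Complex.I • (expGate H θ * rankOneProj ψ₀ * expGate H (-θ)) =
        Complex.I • rankOneProj ψ₀ - (Real.sin θ : ℂ) • X₀ +
          ((Real.cos θ - 1 : ℝ) : ℂ) • Y₀ := by
  intro θ
  have hH : IsIdempotentElem H := hProj
  rw [expGate_of_isIdempotentElem hH, expGate_of_isIdempotentElem hH, hY₀, hX₀]
  exact hH.conj_rotation _ θ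

theorem stmt_3 {N : ℕ} (H : Matrix (Fin N) (Fin N) ℂ)
    (hHerm : H.IsHermitian) (hProj : H * H = H)
    (ψ₀ : Fin N → ℂ) (hψ₀ : star ψ₀ ⬝ᵥ ψ₀ = 1)
    (X₀ Y₀ : Matrix (Fin N) (Fin N) ℂ)
    (hX₀ : X₀ = H * rankOneProj ψ₀ - rankOneProj ψ₀ * H)
    (hY₀ : Y₀ = Complex.I • (H * X₀ - X₀ * H)) :
    ∀ θ : ℝ,
      Complex.I • (expGate H θ * rankOneProj ψ₀ * expGate H (-θ)) =
        Complex.I • rankOneProj ψ₀ - (Real.sin θ : ℂ) • X₀ +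
          ((Real.cos θ - 1 : ℝ) : ℂ) • Y₀ :=
  stmt_3_general H hProj ψ₀ X₀ Y₀ hX₀ hY₀
end

section
/- Let H be an N×N complex Hermitian matrix with H² = H, let |ψ0⟩ ∈ ℂ^N be a unit vector, ψ0 = |ψ0⟩⟨ψ0|, X0 := [H, ψ0], Y0 := i[H, X0], and S := span_ℂ{|ψ0⟩, H|ψ0⟩}. Then for every unit vector |ψ⟩ ∈ S with ψ := |ψ⟩⟨ψ| and q := ⟨ψ|H|ψ⟩, the commutator [H, ψ] lies in the real linear span W := span_ℝ{X0, Y0} of X0 and Y0, and ‖[H, ψ]‖_F = √(2q(1−q)). -/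
/-!
For Hermitian `H`, `[H, |u⟩⟨u|] = |Hu⟩⟨u| - |u⟩⟨Hu|`. Write `ψ = a ψ₀ + b v₀` with `v₀ = H ψ₀`;
since `H² = H` we get `H ψ = (a + b) v₀`, and expanding shows that `[H, ψ]` is
`z E₁ - z̄ E₂ + (z̄ - z) E₃` with `z = (a + b) ā`, `E₁ = |v₀⟩⟨ψ₀|`, `E₂ = |ψ₀⟩⟨v₀|` and
`E₃ = |v₀⟩⟨v₀|`. The same expansion gives `X₀ = E₁ - E₂` and `Y₀ = i (E₁ + E₂ - 2 E₃)`, so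
`[H, ψ] = Re z X₀ + Im z Y₀`.
For the norm, `‖|v⟩⟨ψ| - |ψ⟩⟨v|‖_F²` is a polynomial in the inner products of `ψ` and `v = H ψ`,
all of which equal `q` except `⟨ψ|ψ⟩ = 1`.
-/

open Matrix

open ComplexConjugate

lemma mulVec_mulVec_eq_of_mul_self_eq {n R : Type*} [Fintype n] [NonUnitalSemiring R]
    {H : Matrix n n R} (hProj : H * H = H) (u : n → R) : H *ᵥ (H *ᵥ u) = H *ᵥ u := by
  rw [mulVec_mulVec, hProj]

section VecMulVec

variable {n R : Type*} [Fintype n] [CommRing R] [StarRing R]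

lemma vecMulVec_star_mul_of_isHermitian {H : Matrix n n R} (hH : H.IsHermitian) (x u : n → R) :
    vecMulVec x (star u) * H = vecMulVec x (star (H *ᵥ u)) := by
  rw [vecMulVec_mul, star_mulVec, hH.eq]

lemma star_mulVec_dotProduct_of_isHermitian {H : Matrix n n R} (hH : H.IsHermitian)
    (u w : n → R) : star (H *ᵥ u) ⬝ᵥ w = star u ⬝ᵥ H *ᵥ w := by
  rw [star_mulVec, hH.eq, dotProduct_mulVec]

lemma trace_conjTranspose_mul_self_vecMulVec_sub (u v : n → R) :
    trace ((vecMulVec v (star u) - vecMulVec u (star v))ᴴ *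
        (vecMulVec v (star u) - vecMulVec u (star v))) =
      2 * ((star u ⬝ᵥ u) * (star v ⬝ᵥ v)) - (star v ⬝ᵥ u) ^ 2 - (star u ⬝ᵥ v) ^ 2 := by
  simp only [conjTranspose_sub, conjTranspose_vecMulVec, star_star, sub_mul, mul_sub,
    vecMulVec_mul_vecMulVec, trace_sub, trace_vecMulVec, dotProduct_smul, smul_eq_mul]
  rw [dotProduct_comm u (star u), dotProduct_comm v (star v), dotProduct_comm u (star v),
    dotProduct_comm v (star u)]
  ring

end VecMulVec

lemma smul_sub_conj_smul_add_eq {M : Type*} [AddCommGroup M] [Module ℂ M] (z : ℂ) (A B C : M) :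
    z • A - conj z • B + (conj z - z) • C =
      (z.re : ℂ) • (A - B) + (z.im : ℂ) • (Complex.I • (A + B - (2 : ℂ) • C)) := by
  obtain ⟨x, y, rfl⟩ : ∃ x y : ℝ, z = x + y * Complex.I := ⟨_, _, (Complex.re_add_im z).symm⟩
  simp only [map_add, map_mul, Complex.conj_ofReal, Complex.conj_I, Complex.add_re,
    Complex.add_im, Complex.ofReal_re, Complex.ofReal_im, Complex.mul_re, Complex.mul_im,
    Complex.I_re, Complex.I_im]
  push_cast
  module

lemma commutator_rankOneProj {N : ℕ} {H : Matrix (Fin N) (Fin N) ℂ} (hH : H.IsHermitian)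
    (u : Fin N → ℂ) :
    H * rankOneProj u - rankOneProj u * H =
      vecMulVec (H *ᵥ u) (star u) - vecMulVec u (star (H *ᵥ u)) := by
  rw [rankOneProj, mul_vecMulVec, vecMulVec_star_mul_of_isHermitian hH]

lemma commutator_commutator_rankOneProj {N : ℕ} {H : Matrix (Fin N) (Fin N) ℂ}
    (hH : H.IsHermitian) (hProj : H * H = H) (u : Fin N → ℂ) :
    let X := H * rankOneProj u - rankOneProj u * H
    H * X - X * H = vecMulVec (H *ᵥ u) (star u) + vecMulVec u (star (H *ᵥ u)) -
      (2 : ℂ) • vecMulVec (H *ᵥ u) (star (H *ᵥ u)) := by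
  simp only [commutator_rankOneProj hH, mul_sub, sub_mul, mul_vecMulVec,
    vecMulVec_star_mul_of_isHermitian hH, mulVec_mulVec_eq_of_mul_self_eq hProj]
  module

lemma commutator_rankOneProj_smul_add_smul {N : ℕ} {H : Matrix (Fin N) (Fin N) ℂ}
    (hH : H.IsHermitian) (hProj : H * H = H) (u : Fin N → ℂ) (a b : ℂ) :
    let z := (a + b) * conj a
    H * rankOneProj (a • u + b • H *ᵥ u) - rankOneProj (a • u + b • H *ᵥ u) * H =
      z • vecMulVec (H *ᵥ u) (star u) - conj z • vecMulVec u (star (H *ᵥ u)) +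
        (conj z - z) • vecMulVec (H *ᵥ u) (star (H *ᵥ u)) := by
  simp only [commutator_rankOneProj hH, mulVec_add, mulVec_smul,
    mulVec_mulVec_eq_of_mul_self_eq hProj, star_add, star_smul, vecMulVec_add, add_vecMulVec,
    vecMulVec_smul, smul_vecMulVec, Complex.star_def, map_mul, map_add, Complex.conj_conj]
  module

lemma frobNorm_commutator_rankOneProj {N : ℕ} {H : Matrix (Fin N) (Fin N) ℂ}
    (hH : H.IsHermitian) (hProj : H * H = H) {ψ : Fin N → ℂ} (hψ : star ψ ⬝ᵥ ψ = 1) {q : ℝ}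
    (hq : star ψ ⬝ᵥ (H *ᵥ ψ) = (q : ℂ)) :
    frobNorm (H * rankOneProj ψ - rankOneProj ψ * H) = Real.sqrt (2 * q * (1 - q)) := by
  have hvψ : star (H *ᵥ ψ) ⬝ᵥ ψ = q := by
    rw [star_mulVec_dotProduct_of_isHermitian hH, hq]
  have hvv : star (H *ᵥ ψ) ⬝ᵥ (H *ᵥ ψ) = q := by
    rw [star_mulVec_dotProduct_of_isHermitian hH, mulVec_mulVec_eq_of_mul_self_eq hProj, hq]
  rw [frobNorm, commutator_rankOneProj hH, trace_conjTranspose_mul_self_vecMulVec_sub, hψ, hq,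
    hvψ, hvv]
  congr 1
  norm_cast
  ring

theorem stmt_5_general {N : ℕ} (H : Matrix (Fin N) (Fin N) ℂ)
    (hHerm : H.IsHermitian) (hProj : H * H = H)
    (ψ₀ : Fin N → ℂ)
    (X₀ Y₀ : Matrix (Fin N) (Fin N) ℂ)
    (hX₀ : X₀ = H * rankOneProj ψ₀ - rankOneProj ψ₀ * H)
    (hY₀ : Y₀ = Complex.I • (H * X₀ - X₀ * H))
    (ψ : Fin N → ℂ) (hψunit : star ψ ⬝ᵥ ψ = 1)
    (hψS : ψ ∈ Submodule.span ℂ ({ψ₀, H *ᵥ ψ₀} : Set (Fin N → ℂ)))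
    (q : ℝ) (hq : star ψ ⬝ᵥ (H *ᵥ ψ) = (q : ℂ)) :
    (∃ x y : ℝ,
        H * rankOneProj ψ - rankOneProj ψ * H = (x : ℂ) • X₀ + (y : ℂ) • Y₀)
    ∧ frobNorm (H * rankOneProj ψ - rankOneProj ψ * H) =
        Real.sqrt (2 * q * (1 - q)) := by
  refine ⟨?_, frobNorm_commutator_rankOneProj hHerm hProj hψunit hq⟩
  obtain ⟨a, b, rfl⟩ := Submodule.mem_span_pair.mp hψS
  refine ⟨((a + b) * conj a).re, ((a + b) * conj a).im, ?_⟩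
  rw [commutator_rankOneProj_smul_add_smul hHerm hProj, smul_sub_conj_smul_add_eq, hY₀, hX₀,
    commutator_commutator_rankOneProj hHerm hProj, commutator_rankOneProj hHerm]

theorem stmt_5 {N : ℕ} (H : Matrix (Fin N) (Fin N) ℂ)
    (hHerm : H.IsHermitian) (hProj : H * H = H)
    (ψ₀ : Fin N → ℂ) (hψ₀ : star ψ₀ ⬝ᵥ ψ₀ = 1)
    (X₀ Y₀ : Matrix (Fin N) (Fin N) ℂ)
    (hX₀ : X₀ = H * rankOneProj ψ₀ - rankOneProj ψ₀ * H)
    (hY₀ : Y₀ = Complex.I • (H * X₀ - X₀ * H))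
    (ψ : Fin N → ℂ) (hψunit : star ψ ⬝ᵥ ψ = 1)
    (hψS : ψ ∈ Submodule.span ℂ ({ψ₀, H *ᵥ ψ₀} : Set (Fin N → ℂ)))
    (q : ℝ) (hq : star ψ ⬝ᵥ (H *ᵥ ψ) = (q : ℂ)) :
    (∃ x y : ℝ,
        H * rankOneProj ψ - rankOneProj ψ * H = (x : ℂ) • X₀ + (y : ℂ) • Y₀)
    ∧ frobNorm (H * rankOneProj ψ - rankOneProj ψ * H) =
        Real.sqrt (2 * q * (1 - q)) :=
  stmt_5_general H hHerm hProj ψ₀ X₀ Y₀ hX₀ hY₀ ψ hψunit hψS q hq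
end

section
/- Let H be an N×N complex Hermitian matrix with H² = H, let |ψ0⟩ ∈ ℂ^N be a unit vector with q0 := ⟨ψ0|H|ψ0⟩ ∈ (0,1), and set u := H|ψ0⟩, v := (I − H)|ψ0⟩, X0 := [H, ψ0], Y0 := i[H, X0]. Then for all α, β ∈ ℂ, the vector |ψ⟩ := α u + β v satisfies: (i) ⟨ψ|H|ψ⟩ = |α|² q0; and (ii) if additionally ‖ψ‖ = 1, then with z := α β̄ the commutator of H with ψ := |ψ⟩⟨ψ| satisfies [H, ψ] = Re(z) X0 + Im(z) Y0. -/
/-!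
Because `H` is an orthogonal projector, `u` and `v` are eigenvectors of `H` for the eigenvalues
`1` and `0`, hence orthogonal, and `H ψ = α u`. For Hermitian `H` the commutator with a rank-one
matrix is `[H, |x⟩⟨y|] = |H x⟩⟨y| - |x⟩⟨H y|`, so
`[H, |ψ⟩⟨ψ|] = |α u⟩⟨ψ| - |ψ⟩⟨α u| = z |u⟩⟨v| - z̄ |v⟩⟨u|`.
The case `α = β = 1` gives `X₀ = |u⟩⟨v| - |v⟩⟨u|`, hence `Y₀ = i (|u⟩⟨v| + |v⟩⟨u|)`, and
`Re z • X₀ + Im z • Y₀` has the same coefficients `z` and `-z̄`.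
-/

open Matrix

namespace Matrix

variable {n R : Type*} [Fintype n] [CommRing R] {P : Matrix n n R}

theorem mulVec_mulVec_of_mul_self (hPP : P * P = P) (x : n → R) :
    P *ᵥ (P *ᵥ x) = P *ᵥ x := by
  rw [mulVec_mulVec, hPP]

theorem mulVec_sub_mulVec_of_mul_self (hPP : P * P = P) (x : n → R) :
    P *ᵥ (x - P *ᵥ x) = 0 := by
  rw [mulVec_sub, mulVec_mulVec_of_mul_self hPP, sub_self]

theorem mulVec_smul_add_smul_of_mulVec {u v : n → R} (hu : P *ᵥ u = u) (hv : P *ᵥ v = 0)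
    (α β : R) : P *ᵥ (α • u + β • v) = α • u := by
  rw [mulVec_add, mulVec_smul, mulVec_smul, hu, hv, smul_zero, add_zero]

variable [StarRing R]

theorem IsHermitian.lie_vecMulVec (hP : P.IsHermitian) (x y : n → R) :
    ⁅P, vecMulVec x (star y)⁆ = vecMulVec (P *ᵥ x) (star y) - vecMulVec x (star (P *ᵥ y)) := by
  rw [Ring.lie_def, mul_vecMulVec, vecMulVec_mul, star_mulVec, hP.eq]

theorem IsHermitian.star_mulVec_dotProduct_mulVec_of_mul_self (hP : P.IsHermitian)
    (hPP : P * P = P) (x : n → R) :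
    star (P *ᵥ x) ⬝ᵥ (P *ᵥ x) = star x ⬝ᵥ (P *ᵥ x) := by
  rw [star_mulVec, hP.eq, ← dotProduct_mulVec, mulVec_mulVec_of_mul_self hPP]

theorem IsHermitian.star_dotProduct_eq_zero_of_mulVec (hP : P.IsHermitian) {u v : n → R}
    (hu : P *ᵥ u = u) (hv : P *ᵥ v = 0) : star v ⬝ᵥ u = 0 := by
  rw [← hu, dotProduct_mulVec, ← hP.eq, ← star_mulVec, hv, star_zero, zero_dotProduct]

theorem IsHermitian.star_dotProduct_mulVec_smul_add_smul (hP : P.IsHermitian) {u v : n → R}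
    (hu : P *ᵥ u = u) (hv : P *ᵥ v = 0) (α β : R) :
    star (α • u + β • v) ⬝ᵥ (P *ᵥ (α • u + β • v)) = star α * α * (star u ⬝ᵥ u) := by
  rw [mulVec_smul_add_smul_of_mulVec hu hv, star_add, star_smul, star_smul, add_dotProduct,
    smul_dotProduct, smul_dotProduct, dotProduct_smul, dotProduct_smul,
    hP.star_dotProduct_eq_zero_of_mulVec hu hv]
  simp only [smul_eq_mul, mul_zero, add_zero]
  ring

theorem IsHermitian.lie_vecMulVec_smul_add_smul (hP : P.IsHermitian) {u v : n → R}
    (hu : P *ᵥ u = u) (hv : P *ᵥ v = 0) (α β : R) :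
    ⁅P, vecMulVec (α • u + β • v) (star (α • u + β • v))⁆
      = (α * star β) • vecMulVec u (star v) - (star α * β) • vecMulVec v (star u) := by
  rw [hP.lie_vecMulVec, mulVec_smul_add_smul_of_mulVec hu hv]
  ext i j
  simp only [sub_apply, smul_apply, vecMulVec_apply, Pi.add_apply, Pi.smul_apply, Pi.star_apply,
    star_add, star_smul, smul_eq_mul]
  ring

theorem IsHermitian.lie_vecMulVec_sub_vecMulVec (hP : P.IsHermitian) {u v : n → R}
    (hu : P *ᵥ u = u) (hv : P *ᵥ v = 0) :
    ⁅P, vecMulVec u (star v) - vecMulVec v (star u)⁆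
      = vecMulVec u (star v) + vecMulVec v (star u) := by
  rw [Ring.lie_def, mul_sub, sub_mul, sub_sub_sub_comm, ← Ring.lie_def, ← Ring.lie_def,
    hP.lie_vecMulVec, hP.lie_vecMulVec, hu, hv, star_zero, vecMulVec_zero, zero_vecMulVec,
    sub_zero, zero_sub, sub_neg_eq_add]

end Matrix

theorem Complex.re_smul_sub_add_im_smul_I_smul_add {M : Type*} [AddCommGroup M] [Module ℂ M]
    (z : ℂ) (A B : M) :
    (z.re : ℂ) • (A - B) + (z.im : ℂ) • (I • (A + B)) = z • A - (starRingEnd ℂ) z • B := by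
  conv_rhs => rw [← re_add_im z, map_add, map_mul, conj_ofReal, conj_ofReal, conj_I]
  module

theorem stmt_6_general {N : ℕ} (H : Matrix (Fin N) (Fin N) ℂ)
    (hHerm : H.IsHermitian) (hProj : H * H = H)
    (ψ₀ : Fin N → ℂ)
    (q₀ : ℝ) (hq₀ : star ψ₀ ⬝ᵥ (H *ᵥ ψ₀) = (q₀ : ℂ))
    (u v : Fin N → ℂ) (hu : u = H *ᵥ ψ₀) (hv : v = ψ₀ - H *ᵥ ψ₀)
    (X₀ Y₀ : Matrix (Fin N) (Fin N) ℂ)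
    (hX₀ : X₀ = H * rankOneProj ψ₀ - rankOneProj ψ₀ * H)
    (hY₀ : Y₀ = Complex.I • (H * X₀ - X₀ * H)) :
    ∀ α β : ℂ,
      (star (α • u + β • v) ⬝ᵥ (H *ᵥ (α • u + β • v))
          = ((Complex.normSq α * q₀ : ℝ) : ℂ))
      ∧ (star (α • u + β • v) ⬝ᵥ (α • u + β • v) = 1 →
          H * rankOneProj (α • u + β • v) - rankOneProj (α • u + β • v) * H
            = (((α * (starRingEnd ℂ) β).re : ℝ) : ℂ) • X₀ +
              (((α * (starRingEnd ℂ) β).im : ℝ) : ℂ) • Y₀) := by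
  intro α β
  have hHu : H *ᵥ u = u := hu ▸ mulVec_mulVec_of_mul_self hProj ψ₀
  have hHv : H *ᵥ v = 0 := hv ▸ mulVec_sub_mulVec_of_mul_self hProj ψ₀
  have huu : star u ⬝ᵥ u = q₀ := by
    rw [hu, hHerm.star_mulVec_dotProduct_mulVec_of_mul_self hProj, hq₀]
  have hψ₀ : ψ₀ = (1 : ℂ) • u + (1 : ℂ) • v := by
    rw [hu, hv, one_smul, one_smul, add_sub_cancel]
  have hX : X₀ = vecMulVec u (star v) - vecMulVec v (star u) := by
    rw [hX₀, ← Ring.lie_def, rankOneProj, hψ₀, hHerm.lie_vecMulVec_smul_add_smul hHu hHv]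
    simp
  have hY : Y₀ = Complex.I • (vecMulVec u (star v) + vecMulVec v (star u)) := by
    rw [hY₀, ← Ring.lie_def, hX, hHerm.lie_vecMulVec_sub_vecMulVec hHu hHv]
  refine ⟨?_, fun _ => ?_⟩
  · rw [hHerm.star_dotProduct_mulVec_smul_add_smul hHu hHv, huu, Complex.ofReal_mul,
      Complex.normSq_eq_conj_mul_self]
    rfl
  · rw [← Ring.lie_def, rankOneProj, hHerm.lie_vecMulVec_smul_add_smul hHu hHv, hX, hY,
      Complex.re_smul_sub_add_im_smul_I_smul_add, map_mul, Complex.conj_conj]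
    rfl

theorem stmt_6 {N : ℕ} (H : Matrix (Fin N) (Fin N) ℂ)
    (hHerm : H.IsHermitian) (hProj : H * H = H)
    (ψ₀ : Fin N → ℂ) (hψ₀ : star ψ₀ ⬝ᵥ ψ₀ = 1)
    (q₀ : ℝ) (hq₀ : star ψ₀ ⬝ᵥ (H *ᵥ ψ₀) = (q₀ : ℂ))
    (hq₀pos : 0 < q₀) (hq₀lt : q₀ < 1)
    (u v : Fin N → ℂ) (hu : u = H *ᵥ ψ₀) (hv : v = ψ₀ - H *ᵥ ψ₀)
    (X₀ Y₀ : Matrix (Fin N) (Fin N) ℂ)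
    (hX₀ : X₀ = H * rankOneProj ψ₀ - rankOneProj ψ₀ * H)
    (hY₀ : Y₀ = Complex.I • (H * X₀ - X₀ * H)) :
    ∀ α β : ℂ,
      (star (α • u + β • v) ⬝ᵥ (H *ᵥ (α • u + β • v))
          = ((Complex.normSq α * q₀ : ℝ) : ℂ))
      ∧ (star (α • u + β • v) ⬝ᵥ (α • u + β • v) = 1 →
          H * rankOneProj (α • u + β • v) - rankOneProj (α • u + β • v) * H
            = (((α * (starRingEnd ℂ) β).re : ℝ) : ℂ) • X₀ +
              (((α * (starRingEnd ℂ) β).im : ℝ) : ℂ) • Y₀) :=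
  stmt_6_general H hHerm hProj ψ₀ q₀ hq₀ u v hu hv X₀ Y₀ hX₀ hY₀
end

section
/- Let H be an N×N complex Hermitian matrix with H² = H, let |ψ0⟩ ∈ ℂ^N be a unit vector, ψ0 = |ψ0⟩⟨ψ0|, and f(U) := Tr(H U ψ0 U†). Then the local Riemannian Polyak–Łojasiewicz inequality holds: for every unitary U with f(U) ≥ 1/2, one has ‖grad f(U)‖_F² ≥ 1 − f(U), where grad f(U) = [H, U ψ0 U†] U. -/
/-! With `v = U ψ₀` and `Q = |v⟩⟨v|`, conjugation gives `U ψ₀ U† = Q`, so `grad f(U) = [H, Q] U`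
and `f(U) = p := ⟨v, H v⟩`, where `0 ≤ p ≤ 1` because `0 ≤ H ≤ 1`. For orthogonal projectors
`H`, `Q` one has `‖[H, Q]‖_F² = 2 Tr(HQ) - 2 Tr(HQHQ)`, and `QHQ = p Q` since `Q` has rank one;
hence `‖grad f(U)‖_F² = 2p(1 - p)`, which is at least `1 - p` as soon as `p ≥ 1/2`. -/

open Matrix

/-- The cost value `f(U) = Tr(H U ψ0 U†)` (its real part; it is in fact real). -/
noncomputable def costVal {N : ℕ} (H P U : Matrix (Fin N) (Fin N) ℂ) : ℝ :=
  (Matrix.trace (H * (U * P * Uᴴ))).re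

/-- The Riemannian gradient `grad f(U) = [H, U ψ0 U†] U`. -/
noncomputable def rieGrad {N : ℕ} (H P U : Matrix (Fin N) (Fin N) ℂ) :
    Matrix (Fin N) (Fin N) ℂ :=
  (H * (U * P * Uᴴ) - (U * P * Uᴴ) * H) * U

open scoped ComplexOrder MatrixOrder

namespace Matrix

variable {n R : Type*} [Fintype n] [CommRing R] [StarRing R]

theorem trace_conjTranspose_mul_self_commutator {P Q : Matrix n n R}
    (hP : IsStarProjection P) (hQ : IsStarProjection Q) :
    trace ((P * Q - Q * P)ᴴ * (P * Q - Q * P)) = 2 * trace (P * Q) - 2 * trace (P * Q * P * Q) := by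
  have hPh : Pᴴ = P := hP.isSelfAdjoint
  have hQh : Qᴴ = Q := hQ.isSelfAdjoint
  have hPP : P * P = P := hP.isIdempotentElem
  have hQQ : Q * Q = Q := hQ.isIdempotentElem
  have h1 : trace (Q * P * Q) = trace (P * Q) := by
    rw [trace_mul_comm (Q * P) Q, ← Matrix.mul_assoc, hQQ, trace_mul_comm]
  have h2 : trace (P * Q * P) = trace (P * Q) := by
    rw [trace_mul_comm (P * Q) P, ← Matrix.mul_assoc, hPP]
  have h3 : trace (Q * P * Q * P) = trace (P * Q * P * Q) := by
    rw [trace_mul_comm (Q * P * Q) P]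
    simp only [Matrix.mul_assoc]
  have expand : (P * Q - Q * P)ᴴ * (P * Q - Q * P)
      = Q * P * Q - Q * P * Q * P - P * Q * P * Q + P * Q * P := by
    simp only [conjTranspose_sub, conjTranspose_mul, hPh, hQh, sub_mul, mul_sub]
    simp only [Matrix.mul_assoc, ← Matrix.mul_assoc P P, ← Matrix.mul_assoc Q Q, hPP, hQQ]
    abel
  rw [expand, trace_add, trace_sub, trace_sub, h1, h2, h3]
  ring

end Matrix

theorem frobNorm_sq {N : ℕ} (A : Matrix (Fin N) (Fin N) ℂ) :
    frobNorm A ^ 2 = (trace (Aᴴ * A)).re :=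
  Real.sq_sqrt (Complex.nonneg_iff.mp (posSemidef_conjTranspose_mul_self A).trace_nonneg).1

theorem frobNorm_mul_unitary {N : ℕ} (A : Matrix (Fin N) (Fin N) ℂ)
    {U : Matrix (Fin N) (Fin N) ℂ} (hU : U ∈ unitaryGroup (Fin N) ℂ) :
    frobNorm (A * U) = frobNorm A := by
  have hUU : U * Uᴴ = 1 := Unitary.mul_star_self_of_mem hU
  rw [frobNorm, frobNorm, conjTranspose_mul, trace_mul_comm, Matrix.mul_assoc,
    ← Matrix.mul_assoc U, hUU, Matrix.one_mul, trace_mul_comm]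

theorem IsStarProjection.dotProduct_mulVec_mem_Icc {𝕜 n : Type*} [RCLike 𝕜] [Fintype n]
    [DecidableEq n] {H : Matrix n n 𝕜} (hH : IsStarProjection H) {v : n → 𝕜} (hv : star v ⬝ᵥ v = 1) :
    star v ⬝ᵥ H *ᵥ v ∈ Set.Icc 0 1 := by
  have h0 := (nonneg_iff_posSemidef.mp hH.nonneg).dotProduct_mulVec_nonneg v
  have h1 := (nonneg_iff_posSemidef.mp hH.one_sub_nonneg).dotProduct_mulVec_nonneg v
  rw [sub_mulVec, one_mulVec, dotProduct_sub, hv, sub_nonneg] at h1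
  exact ⟨h0, h1⟩

section RankOne

variable {N : ℕ}

theorem mul_rankOneProj_mul_conjTranspose (U : Matrix (Fin N) (Fin N) ℂ) (ψ : Fin N → ℂ) :
    U * rankOneProj ψ * Uᴴ = rankOneProj (U *ᵥ ψ) := by
  rw [rankOneProj, rankOneProj, mul_vecMulVec, vecMulVec_mul, star_mulVec]

theorem isStarProjection_rankOneProj {v : Fin N → ℂ} (hv : star v ⬝ᵥ v = 1) :
    IsStarProjection (rankOneProj v) where
  isIdempotentElem := by
    rw [IsIdempotentElem, rankOneProj, vecMulVec_mul_vecMulVec, hv, one_smul]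
  isSelfAdjoint := by
    rw [IsSelfAdjoint, rankOneProj, star_eq_conjTranspose, conjTranspose_vecMulVec, star_star]

theorem trace_mul_rankOneProj (A : Matrix (Fin N) (Fin N) ℂ) (v : Fin N → ℂ) :
    trace (A * rankOneProj v) = star v ⬝ᵥ A *ᵥ v := by
  rw [rankOneProj, mul_vecMulVec, trace_vecMulVec, dotProduct_comm]

theorem rankOneProj_mul_mul_rankOneProj (A : Matrix (Fin N) (Fin N) ℂ) (v : Fin N → ℂ) :
    rankOneProj v * A * rankOneProj v = (star v ⬝ᵥ A *ᵥ v) • rankOneProj v := by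
  rw [rankOneProj, vecMulVec_mul, vecMulVec_mul_vecMulVec, ← dotProduct_mulVec, vecMulVec_smul]

theorem frobNorm_commutator_rankOneProj_sq {H : Matrix (Fin N) (Fin N) ℂ}
    (hH : IsStarProjection H) {v : Fin N → ℂ} (hv : star v ⬝ᵥ v = 1) :
    frobNorm (H * rankOneProj v - rankOneProj v * H) ^ 2
      = 2 * (trace (H * rankOneProj v)).re * (1 - (trace (H * rankOneProj v)).re) := by
  set z := star v ⬝ᵥ H *ᵥ v
  have hz_im : z.im = 0 := (Complex.nonneg_iff.mp (hH.dotProduct_mulVec_mem_Icc hv).1).2.symm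
  have htr : trace (H * rankOneProj v) = z := trace_mul_rankOneProj H v
  have htr2 : trace (H * rankOneProj v * H * rankOneProj v) = z * z := by
    rw [Matrix.mul_assoc, Matrix.mul_assoc, ← Matrix.mul_assoc (rankOneProj v),
      rankOneProj_mul_mul_rankOneProj, Matrix.mul_smul, trace_smul, htr, smul_eq_mul]
  rw [frobNorm_sq, trace_conjTranspose_mul_self_commutator hH (isStarProjection_rankOneProj hv),
    htr2, htr]
  simp only [Complex.sub_re, Complex.mul_re, hz_im]
  norm_num
  ring

end RankOne

theorem stmt_16 {N : ℕ} (H : Matrix (Fin N) (Fin N) ℂ)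
    (hHerm : H.IsHermitian) (hProj : H * H = H)
    (ψ₀ : Fin N → ℂ) (hψ₀ : star ψ₀ ⬝ᵥ ψ₀ = 1) :
    ∀ U ∈ Matrix.unitaryGroup (Fin N) ℂ,
      1 / 2 ≤ costVal H (rankOneProj ψ₀) U →
      1 - costVal H (rankOneProj ψ₀) U
        ≤ frobNorm (rieGrad H (rankOneProj ψ₀) U) ^ 2 := by
  intro U hU hf
  have hH : IsStarProjection H := ⟨hProj, hHerm⟩
  set v := U *ᵥ ψ₀
  have hv : star v ⬝ᵥ v = 1 := by
    rw [star_mulVec, ← dotProduct_mulVec, mulVec_mulVec, ← star_eq_conjTranspose,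
      Unitary.star_mul_self_of_mem hU, one_mulVec, hψ₀]
  have hcost : costVal H (rankOneProj ψ₀) U = (trace (H * rankOneProj v)).re := by
    rw [costVal, mul_rankOneProj_mul_conjTranspose]
  have hcost_le : costVal H (rankOneProj ψ₀) U ≤ 1 := by
    rw [hcost, trace_mul_rankOneProj]
    exact (Complex.le_def.mp (hH.dotProduct_mulVec_mem_Icc hv).2).1
  have hgrad : frobNorm (rieGrad H (rankOneProj ψ₀) U) ^ 2
      = 2 * costVal H (rankOneProj ψ₀) U * (1 - costVal H (rankOneProj ψ₀) U) := by
    rw [rieGrad, mul_rankOneProj_mul_conjTranspose, frobNorm_mul_unitary _ hU,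
      frobNorm_commutator_rankOneProj_sq hH hv, hcost]
  rw [hgrad]
  nlinarith [mul_nonneg (sub_nonneg.2 hf) (sub_nonneg.2 hcost_le)]
end

section
/- Let L ≥ 2 and let (q_k)_{k≥0} be a real sequence with q_k ∈ [0,1] for all k and q_0 ∈ (0,1), satisfying the recurrence q_{k+1} ≥ q_k + q_k(1 − q_k)/L for all k ≥ 0. Then for every ε with 0 < ε ≤ q_0 and every integer T ≥ 6 L · log(1/ε), one has 1 − q_T ≤ ε. -/
/-!
Track the odds ratio `(1 - q k) / q k`: the step inequality makes it contract by the factor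
`L / (L + 1) ≤ exp (-1 / (L + 1))` at every step, so after `T ≥ 2 (L + 1) log (1 / ε)` steps it has
shrunk by `ε ^ 2`. It starts at most `1 / ε` because `q 0 ≥ ε`, and it dominates `1 - q T`.
-/

open Real

namespace AscentRecurrence

variable {L : ℝ} {q : ℕ → ℝ}

theorem pos_of_step (hL : 0 < L) (hle : ∀ k, q k ≤ 1)
    (hstep : ∀ k, q k + q k * (1 - q k) / L ≤ q (k + 1)) (h0 : 0 < q 0) (k : ℕ) : 0 < q k := by
  induction k with
  | zero => exact h0
  | succ k ih =>
    have : 0 ≤ q k * (1 - q k) / L := div_nonneg (mul_nonneg ih.le (sub_nonneg.2 (hle k))) hL.le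
    linarith [hstep k]

theorem odds_succ_le {p p' : ℝ} (hL : 0 < L) (hp : 0 < p) (hp1 : p ≤ 1)
    (hstep : p + p * (1 - p) / L ≤ p') :
    (1 - p') / p' ≤ L / (L + 1) * ((1 - p) / p) := by
  have hgain : p * (1 - p) ≤ L * (p' - p) := by
    rw [← div_le_iff₀' hL]
    linarith
  have hp' : 0 < p' := by nlinarith
  rw [show L / (L + 1) * ((1 - p) / p) = L * (1 - p) / ((L + 1) * p) by field_simp,
    div_le_div_iff₀ hp' (by positivity)]
  -- the difference of the two sides is `(L + p) (p' - p) - p (1 - p) ≥ p ^ 2 (1 - p) / L ≥ 0`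
  nlinarith [mul_le_mul_of_nonneg_left hgain (by linarith : 0 ≤ L + p),
    mul_nonneg hp.le (sub_nonneg.2 hp1)]

theorem odds_le_geometric (hL : 0 < L) (hle : ∀ k, q k ≤ 1)
    (hstep : ∀ k, q k + q k * (1 - q k) / L ≤ q (k + 1)) (h0 : 0 < q 0) (k : ℕ) :
    (1 - q k) / q k ≤ (L / (L + 1)) ^ k * ((1 - q 0) / q 0) := by
  induction k with
  | zero => simp
  | succ k ih =>
    calc (1 - q (k + 1)) / q (k + 1) ≤ L / (L + 1) * ((1 - q k) / q k) :=
          odds_succ_le hL (pos_of_step hL hle hstep h0 k) (hle k) (hstep k)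
      _ ≤ L / (L + 1) * ((L / (L + 1)) ^ k * ((1 - q 0) / q 0)) := by gcongr
      _ = (L / (L + 1)) ^ (k + 1) * ((1 - q 0) / q 0) := by ring

end AscentRecurrence

theorem pow_div_add_one_le_sq {L ε : ℝ} {T : ℕ} (hL : 0 < L) (hε : 0 < ε)
    (hT : 2 * (L + 1) * log (1 / ε) ≤ T) : (L / (L + 1)) ^ T ≤ ε ^ 2 := by
  have hL1 : 0 < L + 1 := by linarith
  have hbase : L / (L + 1) ≤ exp (-(1 / (L + 1))) := by
    have h := add_one_le_exp (-(1 / (L + 1)))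
    rwa [show -(1 / (L + 1)) + 1 = L / (L + 1) by field_simp; ring] at h
  have hexponent : -(T / (L + 1)) ≤ 2 * log ε := by
    rw [one_div, log_inv] at hT
    have := (le_div_iff₀ hL1).2 (by linarith : -(2 * log ε) * (L + 1) ≤ T)
    linarith
  calc (L / (L + 1)) ^ T ≤ exp (-(1 / (L + 1))) ^ T := by gcongr
    _ = exp (-(T / (L + 1))) := by rw [← exp_nat_mul]; ring_nf
    _ ≤ exp (2 * log ε) := exp_le_exp.2 hexponent
    _ = ε ^ 2 := by rw [← exp_log (pow_pos hε 2), log_pow]; norm_num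

theorem stmt_18_general (L : ℝ) (hL : 2 ≤ L) (q : ℕ → ℝ)
    (hrange : ∀ k, 0 ≤ q k ∧ q k ≤ 1)
    (hstep : ∀ k, q k + q k * (1 - q k) / L ≤ q (k + 1)) :
    ∀ ε : ℝ, 0 < ε → ε ≤ q 0 →
      ∀ T : ℕ, 6 * L * Real.log (1 / ε) ≤ (T : ℝ) → 1 - q T ≤ ε := by
  intro ε hε hεq0 T hT
  have hL0 : 0 < L := by linarith
  have hle : ∀ k, q k ≤ 1 := fun k => (hrange k).2
  have hq0 : 0 < q 0 := hε.trans_le hεq0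
  have hqT : 0 < q T := AscentRecurrence.pos_of_step hL0 hle hstep hq0 T
  have hlog : 0 ≤ log (1 / ε) := log_nonneg (one_le_one_div hε (hεq0.trans (hle 0)))
  have hT' : 2 * (L + 1) * log (1 / ε) ≤ T :=
    (mul_le_mul_of_nonneg_right (by linarith) hlog).trans hT
  calc 1 - q T ≤ (1 - q T) / q T := le_div_self (sub_nonneg.2 (hle T)) hqT (hle T)
    _ ≤ (L / (L + 1)) ^ T * ((1 - q 0) / q 0) :=
        AscentRecurrence.odds_le_geometric hL0 hle hstep hq0 T
    _ ≤ ε ^ 2 * (1 / ε) :=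
        mul_le_mul (pow_div_add_one_le_sq hL0 hε hT')
          (div_le_div₀ zero_le_one (by linarith) hε hεq0)
          (div_nonneg (sub_nonneg.2 (hle 0)) hq0.le) (by positivity)
    _ = ε := by field_simp

theorem stmt_18 (L : ℝ) (hL : 2 ≤ L) (q : ℕ → ℝ)
    (hrange : ∀ k, 0 ≤ q k ∧ q k ≤ 1) (hq0pos : 0 < q 0) (hq0lt : q 0 < 1)
    (hstep : ∀ k, q k + q k * (1 - q k) / L ≤ q (k + 1)) :
    ∀ ε : ℝ, 0 < ε → ε ≤ q 0 →
      ∀ T : ℕ, 6 * L * Real.log (1 / ε) ≤ (T : ℝ) → 1 - q T ≤ ε :=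
  stmt_18_general L hL q hrange hstep
end
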